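/- Define, for w, ζ ∈ ℝ³, the set K(w,ζ) = {v ∈ ℝ³ : |v| ≤ 3, |v−w| ≥ 1, |⟨v−w, ζ⟩| ≥ |ζ|}. Then for every w ∈ ℝ³ and ζ ∈ ℝ³ there exists a point x on the sphere S(0,2) = {y : |y| = 2} such that the open ball B(x,1) of radius 1 centered at x is contained in K(w,ζ). -/

import Mathlib

/-!
Choose a unit vector `e` with `ζ ∈ ℝ e`, oriented so that `⟪w, e⟫ ≤ 0`, and put `x = 2 e`.
Then `x` is at least as far from `w` as from `0`, and `|⟪x - w, ζ⟫| ≥ 2 ‖ζ‖`; both margins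
survive moving `x` by less than `1`.
-/

open Metric RealInnerProductSpace

/-- The set `K(w,ζ) = {v ∈ ℝ³ : |v| ≤ 3, |v−w| ≥ 1, |⟨v−w, ζ⟩| ≥ |ζ|}`. -/
def Kset (w ζ : EuclideanSpace ℝ (Fin 3)) : Set (EuclideanSpace ℝ (Fin 3)) :=
  {v | ‖v‖ ≤ 3 ∧ 1 ≤ ‖v - w‖ ∧ ‖ζ‖ ≤ |⟪v - w, ζ⟫|}

section InnerProductSpace

variable {E : Type*} [NormedAddCommGroup E] [InnerProductSpace ℝ E]

theorem exists_norm_eq_one_smul_eq [Nontrivial E] (ζ : E) :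
    ∃ e : E, ‖e‖ = 1 ∧ ∃ c : ℝ, c • e = ζ := by
  by_cases hζ : ζ = 0
  · obtain ⟨e, he⟩ := exists_norm_eq E zero_le_one
    exact ⟨e, he, 0, by rw [zero_smul, hζ]⟩
  · exact ⟨‖ζ‖⁻¹ • ζ, norm_smul_inv_norm hζ, ‖ζ‖, smul_inv_smul₀ (norm_ne_zero_iff.2 hζ) ζ⟩

theorem exists_norm_eq_one_smul_eq_inner_nonpos [Nontrivial E] (w ζ : E) :
    ∃ e : E, ‖e‖ = 1 ∧ (∃ c : ℝ, c • e = ζ) ∧ ⟪w, e⟫ ≤ 0 := by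
  obtain ⟨e, he, c, rfl⟩ := exists_norm_eq_one_smul_eq ζ
  rcases le_total ⟪w, e⟫ 0 with hwe | hwe
  · exact ⟨e, he, ⟨c, rfl⟩, hwe⟩
  · refine ⟨-e, by rw [norm_neg, he], ⟨-c, neg_smul_neg c e⟩, ?_⟩
    rw [inner_neg_right]
    linarith

theorem norm_le_norm_sub_of_inner_nonpos {x w : E} (h : ⟪x, w⟫ ≤ 0) : ‖x‖ ≤ ‖x - w‖ := by
  rw [← sq_le_sq₀ (norm_nonneg x) (norm_nonneg _), norm_sub_sq_real]
  nlinarith [sq_nonneg ‖w‖]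

theorem mul_norm_le_abs_inner_smul_sub {e w : E} (he : ‖e‖ = 1) (hwe : ⟪w, e⟫ ≤ 0) (c : ℝ)
    {r : ℝ} (hr : 0 ≤ r) : r * ‖c • e‖ ≤ |⟪r • e - w, c • e⟫| := by
  have hinner : ⟪r • e - w, c • e⟫ = c * (r - ⟪w, e⟫) := by
    rw [inner_sub_left, real_inner_smul_left, real_inner_smul_right, real_inner_smul_right,
      real_inner_self_eq_norm_sq, he]
    ring
  rw [hinner, abs_mul, abs_of_nonneg (a := r - ⟪w, e⟫) (by linarith), norm_smul, he,
    Real.norm_eq_abs]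
  nlinarith [abs_nonneg c]

theorem abs_inner_sub_le_of_mem_ball {x v : E} {r : ℝ} (hv : v ∈ ball x r) (w ζ : E) :
    |⟪x - w, ζ⟫| - r * ‖ζ‖ ≤ |⟪v - w, ζ⟫| := by
  have hsplit : ⟪v - w, ζ⟫ = ⟪x - w, ζ⟫ + ⟪v - x, ζ⟫ := by
    rw [← inner_add_left, sub_add_sub_cancel']
  have hvx : |⟪v - x, ζ⟫| ≤ r * ‖ζ‖ :=
    (abs_real_inner_le_norm _ _).trans
      (mul_le_mul_of_nonneg_right (mem_ball_iff_norm.1 hv).le (norm_nonneg ζ))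
  have htri := abs_sub_abs_le_abs_sub ⟪x - w, ζ⟫ (-⟪v - x, ζ⟫)
  rw [abs_neg, sub_neg_eq_add, ← hsplit] at htri
  linarith

end InnerProductSpace

theorem ball_subset_Kset {w ζ x : EuclideanSpace ℝ (Fin 3)} (hx : ‖x‖ = 2)
    (hxw : 2 ≤ ‖x - w‖) (hxζ : 2 * ‖ζ‖ ≤ |⟪x - w, ζ⟫|) : ball x 1 ⊆ Kset w ζ := by
  intro v hv
  refine ⟨?_, ?_, ?_⟩
  · linarith [norm_lt_of_mem_ball hv]
  · linarith [norm_sub_le_norm_sub_add_norm_sub x v w, mem_ball_iff_norm'.1 hv]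
  · linarith [abs_inner_sub_le_of_mem_ball hv w ζ]

/-- For every `w, ζ ∈ ℝ³` there is a point `x` on the sphere of center `0` and radius `2`
such that the open ball `B(x,1)` is contained in `K(w,ζ)`. -/
theorem stmt_4 (w ζ : EuclideanSpace ℝ (Fin 3)) :
    ∃ x : EuclideanSpace ℝ (Fin 3), ‖x‖ = 2 ∧ Metric.ball x 1 ⊆ Kset w ζ := by
  obtain ⟨e, he, ⟨c, rfl⟩, hwe⟩ := exists_norm_eq_one_smul_eq_inner_nonpos w ζ
  have hx : ‖(2 : ℝ) • e‖ = 2 := by rw [norm_smul, he, Real.norm_two, mul_one]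
  refine ⟨(2 : ℝ) • e, hx, ball_subset_Kset hx ?_ ?_⟩
  · refine hx.ge.trans (norm_le_norm_sub_of_inner_nonpos ?_)
    rw [real_inner_smul_left, real_inner_comm]
    linarith
  · exact mul_norm_le_abs_inner_smul_sub he hwe c zero_le_two
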